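/- arXiv:2605.03218 — 2 statements merged into one kernel-verified Lean document; each statement's English description precedes it below -/
import Mathlib

section
/- Let n ≥ 1 and let E ⊆ V be an error pattern in the subdivided complete bipartite graph K_{n,n}. Then there exists a type-preserving automorphism ψ mapping E onto the complementary pattern V ∖ E if and only if |E| = n. -/
/-!
The subdivided complete bipartite graph `K_{m,n}`: variable nodes
`V = A ⊔ B` with `A = Fin m`, `B = Fin n`; check nodes `C = A × B`;
and, for each `(a, b) ∈ A × B`, an edge between variable `a ∈ A` and the
check `(a, b)`, and an edge between variable `b ∈ B` and the check `(a, b)`.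
-/

/-- Variable nodes of the subdivided `K_{m,n}`. -/
abbrev Var (m n : ℕ) := Fin m ⊕ Fin n

/-- Check nodes of the subdivided `K_{m,n}`. -/
abbrev Check (m n : ℕ) := Fin m × Fin n

/-- Adjacency between a variable node and a check node in the subdivided `K_{m,n}`:
the check `(a, b)` is adjacent exactly to the variable `a ∈ A` and the variable `b ∈ B`. -/
def Adj (m n : ℕ) (u : Var m n) (c : Check m n) : Prop :=
  u = Sum.inl c.1 ∨ u = Sum.inr c.2

/-- The side `A ⊆ V` of the variable nodes. -/
def sideA (m n : ℕ) : Set (Var m n) := Set.range Sum.inl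

/-- The side `B ⊆ V` of the variable nodes. -/
def sideB (m n : ℕ) : Set (Var m n) := Set.range Sum.inr

/-- A type-preserving automorphism of the subdivided `K_{m,n}`: a bijection of
`V ⊔ C` mapping `V` onto `V` and `C` onto `C` (hence a pair of bijections of `V`
and of `C`) that preserves adjacency. -/
structure Aut (m n : ℕ) where
  varMap : Var m n ≃ Var m n
  checkMap : Check m n ≃ Check m n
  adj_iff : ∀ u c, Adj m n (varMap u) (checkMap c) ↔ Adj m n u c

/-- Syndrome label induced by an error pattern `E ⊆ V` at a check `c = (a,b)`:
the label is `1` iff exactly one of the two variable neighbors of `c` lies in `E`. -/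
def synd (m n : ℕ) (E : Set (Var m n)) (c : Check m n) : Prop :=
  Xor' (Sum.inl c.1 ∈ E) (Sum.inr c.2 ∈ E)

/-- The monomial edge labeling on the subdivided `K_{m,n}`: the edge between the
variable `a ∈ A` and the check `(a,b)` is labeled `Sum.inl a`, and the edge between
the variable `b ∈ B` and the check `(a,b)` is labeled `Sum.inr b`; i.e. the label of
an edge `(u, c)` is the variable endpoint `u`, viewed in `Fin m ⊕ Fin n`. -/
def edgeLabel (m n : ℕ) (u : Var m n) (_c : Check m n) : Fin m ⊕ Fin n := u

/-!
A type-preserving automorphism permutes the variable nodes, so it can only move `E` onto its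
complement when `E` is exactly half of the `2n` variables. Conversely, if `|E| = n`, write
`E = E_A ⊔ E_B` by sides; then `|E_B| = n - |E_A| = |A ∖ E_A|` and `|E_A| = |B ∖ E_B|`, so a
map exchanging the two sides, `b ↦ σ b` and `a ↦ τ a`, can send `E_B` onto `A ∖ E_A` and `E_A`
onto `B ∖ E_B`. Every such side swap is an automorphism, since it permutes the checks by
`(a, b) ↦ (σ b, τ a)`.
-/

theorem Set.exists_equiv_image_eq_of_ncard_eq {α : Type*} [Finite α] {s t : Set α}
    (h : s.ncard = t.ncard) : ∃ e : α ≃ α, e '' s = t := by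
  classical
  obtain ⟨f⟩ : Nonempty (s ≃ t) := by
    rwa [← Finite.card_eq, Nat.card_coe_set_eq, Nat.card_coe_set_eq]
  refine ⟨f.extendSubtype, Set.eq_of_subset_of_ncard_le ?_ ?_⟩
  · rintro _ ⟨x, hx, rfl⟩
    exact f.extendSubtype_mem x hx
  · rw [Set.ncard_image_of_injective _ (Equiv.injective _), h]

theorem Set.two_mul_ncard_eq_card_of_image_eq_compl {α : Type*} [Finite α] (e : α ≃ α)
    {s : Set α} (h : e '' s = sᶜ) : 2 * s.ncard = Nat.card α := by
  have himage : (e '' s).ncard = s.ncard := Set.ncard_image_of_injective _ e.injective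
  rw [h] at himage
  have := Set.ncard_add_ncard_compl s
  omega

theorem Set.ncard_preimage_inl_add_ncard_preimage_inr {α β : Type*} [Finite α] [Finite β]
    (s : Set (α ⊕ β)) : (Sum.inl ⁻¹' s).ncard + (Sum.inr ⁻¹' s).ncard = s.ncard := by
  conv_rhs => rw [← Set.sumEquiv.symm_apply_apply s]
  rw [Set.sumEquiv_symm_apply, Set.ncard_union_eq Set.disjoint_image_inl_image_inr,
    Set.ncard_image_of_injective _ Sum.inl_injective,
    Set.ncard_image_of_injective _ Sum.inr_injective]
  rfl

def swapAut (n : ℕ) (σ τ : Fin n ≃ Fin n) : Aut n n where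
  varMap := (Equiv.sumComm (Fin n) (Fin n)).trans (Equiv.sumCongr σ τ)
  checkMap := (Equiv.prodComm (Fin n) (Fin n)).trans (Equiv.prodCongr σ τ)
  adj_iff := by
    rintro (a | b) ⟨a', b'⟩ <;> simp [Adj, σ.injective.eq_iff, τ.injective.eq_iff]

theorem swapAut_varMap_image_eq {n : ℕ} {σ τ : Fin n ≃ Fin n} {E F : Set (Var n n)}
    (hσ : σ '' (Sum.inr ⁻¹' E) = Sum.inl ⁻¹' F) (hτ : τ '' (Sum.inl ⁻¹' E) = Sum.inr ⁻¹' F) :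
    (swapAut n σ τ).varMap '' E = F := by
  ext (a | b)
  · rw [← Set.mem_preimage (f := Sum.inl) (s := F), ← hσ]
    simp [swapAut, ← Equiv.eq_symm_apply]
  · rw [← Set.mem_preimage (f := Sum.inr) (s := F), ← hτ]
    simp [swapAut, ← Equiv.eq_symm_apply]

theorem stmt11_general (n : ℕ) (E : Set (Var n n)) :
    (∃ ψ : Aut n n, ψ.varMap '' E = Set.univ \ E) ↔ E.ncard = n := by
  rw [← Set.compl_eq_univ_sdiff]
  constructor
  · rintro ⟨ψ, hψ⟩
    have := Set.two_mul_ncard_eq_card_of_image_eq_compl ψ.varMap hψ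
    simp only [Nat.card_eq_fintype_card, Fintype.card_sum, Fintype.card_fin] at this
    omega
  · intro hE
    have hsides := Set.ncard_preimage_inl_add_ncard_preimage_inr E
    have hA := Set.ncard_add_ncard_compl (Sum.inl ⁻¹' E : Set (Fin n))
    have hB := Set.ncard_add_ncard_compl (Sum.inr ⁻¹' E : Set (Fin n))
    rw [Nat.card_fin] at hA hB
    obtain ⟨σ, hσ⟩ := Set.exists_equiv_image_eq_of_ncard_eq
      (s := Sum.inr ⁻¹' E) (t := Sum.inl ⁻¹' Eᶜ) (by rw [Set.preimage_compl]; omega)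
    obtain ⟨τ, hτ⟩ := Set.exists_equiv_image_eq_of_ncard_eq
      (s := Sum.inl ⁻¹' E) (t := Sum.inr ⁻¹' Eᶜ) (by rw [Set.preimage_compl]; omega)
    exact ⟨swapAut n σ τ, swapAut_varMap_image_eq hσ hτ⟩

/-- For `n ≥ 1`, there is a type-preserving automorphism of the subdivided
`K_{n,n}` mapping `E` onto the complementary pattern `V ∖ E` iff `|E| = n`. -/
theorem stmt11 (n : ℕ) (hn : 1 ≤ n) (E : Set (Var n n)) :
    (∃ ψ : Aut n n, ψ.varMap '' E = Set.univ \ E) ↔ E.ncard = n :=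
  stmt11_general n E
end

section
/- Let G be a finite bipartite Tanner graph with variable nodes V, check nodes C and adjacency relation Adj ⊆ V × C, let s : C → Bool be a syndrome labeling, let λ ∈ ℝ, let χ : Adj → K be an edge labeling with label set K, let (Φ^{(k)})_{k ∈ K} be a family of update functions Φ^{(k)} : ℝ → Multiset ℝ → ℝ, and let Ψ : Bool → Multiset ℝ → ℝ be a shared check update function. Define messages by the flooding recursion: ν⁰_{v→c} is a given initialization, and for ℓ ≥ 1, ν^ℓ_{v→c} = Φ^{(χ(v,c))}(λ, {μ^{ℓ-1}_{c'→v} : c' adjacent to v, c' ≠ c}) and μ^ℓ_{c→v} = Ψ(s(c), {ν^ℓ_{v'→c} : v' adjacent to c, v' ≠ v}), where the second arguments are multisets. Let ψ be a bijection of V ⊔ C with ψ(V) = V and ψ(C) = C that preserves adjacency, the syndrome labels (s(ψ(c)) = s(c)), and the edge labels (χ(ψ(v), ψ(c)) = χ(v,c)), and suppose the initialization is ψ-invariant: ν⁰_{ψ(v)→ψ(c)} = ν⁰_{v→c} for all adjacent (v,c). Then for every iteration ℓ ≥ 0 and every adjacent pair (v,c): ν^ℓ_{v→c} = ν^ℓ_{ψ(v)→ψ(c)}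 and μ^ℓ_{c→v} = μ^ℓ_{ψ(c)→ψ(v)}. -/
/-!
Induction on the iteration. Each message is an update rule applied to the multiset of messages
on the other edges at its source node; a part-preserving automorphism `ψ` maps those edges
bijectively onto the corresponding edges at the image node, so once the incoming messages are
`ψ`-equivariant, the two multisets agree. Since `ψ` also fixes the syndrome bits and edge labels,
the same rule is applied to both, and the outgoing messages are equivariant too.
-/

open Finset

theorem Finset.filter_univ_val_map_equiv {α β γ : Type*} [Fintype α] [Fintype β] (e : α ≃ β)
    {P : α → Prop} {Q : β → Prop} [DecidablePred P] [DecidablePred Q]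
    (hPQ : ∀ a, Q (e a) ↔ P a) {f : α → γ} {g : β → γ} (hfg : ∀ a, P a → g (e a) = f a) :
    (univ.filter Q).val.map g = (univ.filter P).val.map f := by
  rw [filter_val, filter_val, ← Multiset.map_univ_val_equiv e, Multiset.filter_map,
    Multiset.map_map, Multiset.filter_congr (p := Q ∘ e) fun a _ => hPQ a]
  exact Multiset.map_congr rfl fun a ha => hfg a (Multiset.of_mem_filter ha)

/-- **Equivariance of edge-anisotropic syndrome-based flooding decoders.**
On a finite bipartite Tanner graph with an edge labeling `χ` (with label set
`K`), a family of permutation-invariant variable update rules `Φ k` selected by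
the edge label, and a shared permutation-invariant check update rule `Ψ`, any
bijection of `V ⊔ C` preserving the parts, the adjacency, the syndrome labels,
and the edge labels, under which the initialization is invariant, leaves the
whole message evolution equivariant. -/
theorem stmt16
    {V C K : Type*} [Fintype V] [Fintype C] [DecidableEq V] [DecidableEq C]
    (Adj : V → C → Prop) [∀ v c, Decidable (Adj v c)]
    (s : C → Bool) (lam : ℝ)
    (χ : V → C → K)  -- edge labeling (only its values on adjacent pairs matter)
    (Φ : K → ℝ → Multiset ℝ → ℝ) (Ψ : Bool → Multiset ℝ → ℝ)
    (ν : ℕ → V → C → ℝ) (μ : ℕ → C → V → ℝ)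
    -- label-dependent variable-to-check update (flooding schedule), for `ℓ ≥ 1`:
    (hν : ∀ ℓ v c, Adj v c →
      ν (ℓ + 1) v c =
        Φ (χ v c) lam ((Finset.univ.filter fun c' => Adj v c' ∧ c' ≠ c).val.map
          fun c' => μ ℓ c' v))
    -- shared check-to-variable update:
    (hμ : ∀ ℓ v c, Adj v c →
      μ ℓ c v =
        Ψ (s c) ((Finset.univ.filter fun v' => Adj v' c ∧ v' ≠ v).val.map
          fun v' => ν ℓ v' c))
    -- the symmetry `ψ`, given by its restrictions to `V` and to `C`:
    (ψV : V ≃ V) (ψC : C ≃ C)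
    (hadj : ∀ v c, Adj (ψV v) (ψC c) ↔ Adj v c)
    (hs : ∀ c, s (ψC c) = s c)
    (hχ : ∀ v c, Adj v c → χ (ψV v) (ψC c) = χ v c)
    -- `ψ`-invariance of the initialization:
    (hinit : ∀ v c, Adj v c → ν 0 (ψV v) (ψC c) = ν 0 v c) :
    ∀ ℓ v c, Adj v c →
      ν ℓ v c = ν ℓ (ψV v) (ψC c) ∧ μ ℓ c v = μ ℓ (ψC c) (ψV v) := by
  have check_step : ∀ ℓ, (∀ v c, Adj v c → ν ℓ (ψV v) (ψC c) = ν ℓ v c) →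
      ∀ v c, Adj v c → μ ℓ (ψC c) (ψV v) = μ ℓ c v := fun ℓ hνℓ v c hvc => by
    rw [hμ ℓ v c hvc, hμ ℓ _ _ ((hadj v c).2 hvc), hs]
    exact congrArg _ <| filter_univ_val_map_equiv ψV
      (fun a => and_congr (hadj a c) ψV.injective.ne_iff) fun a ha => hνℓ a c ha.1
  have var_step : ∀ ℓ, (∀ v c, Adj v c → μ ℓ (ψC c) (ψV v) = μ ℓ c v) →
      ∀ v c, Adj v c → ν (ℓ + 1) (ψV v) (ψC c) = ν (ℓ + 1) v c := fun ℓ hμℓ v c hvc => by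
    rw [hν ℓ v c hvc, hν ℓ _ _ ((hadj v c).2 hvc), hχ v c hvc]
    exact congrArg _ <| filter_univ_val_map_equiv ψC
      (fun a => and_congr (hadj v a) ψC.injective.ne_iff) fun a ha => hμℓ v a ha.1
  have hνequiv : ∀ ℓ v c, Adj v c → ν ℓ (ψV v) (ψC c) = ν ℓ v c := by
    intro ℓ
    induction ℓ with
    | zero => exact hinit
    | succ ℓ ih => exact var_step ℓ (check_step ℓ ih)
  exact fun ℓ v c hvc => ⟨(hνequiv ℓ v c hvc).symm, (check_step ℓ (hνequiv ℓ) v c hvc).symm⟩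
end
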